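/- arXiv:math/0612175 — 3 statements merged into one kernel-verified Lean document; each statement's English description precedes it below -/
import Mathlib

section
/- Let k be a field and let C, D be conilpotent (cocomplete) coassociative k-coalgebras without counit, and let f, g : C → D be coalgebra homomorphisms. Then the pair (f, g) admits an equalizer in the category of conilpotent k-coalgebras. -/
open TensorProduct LinearMap

structure ModB (k : Type) [CommRing k] where
  carrier : Type
  [ag : AddCommGroup carrier]
  [mo : Module k carrier]

attribute [instance] ModB.ag ModB.mo

variable (k : Type) [CommRing k]

/-- Iterated tensor power: `TP k C n` has `n+1` factors of `C`. -/
noncomputable def TP (C : Type) [AddCommGroup C] [Module k C] : ℕ → ModB k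
  | 0 => ⟨C⟩
  | n + 1 => ⟨C ⊗[k] (TP C n).carrier⟩

variable {k}
variable {C D : Type} [AddCommGroup C] [Module k C] [AddCommGroup D] [Module k D]

/-- `iterΔ Δ n` is the `n`-fold iterate `Δ^(n+1) : C → C^{⊗(n+1)}`. -/
noncomputable def iterΔ (Δ : C →ₗ[k] C ⊗[k] C) : ∀ n, C →ₗ[k] (TP k C n).carrier
  | 0 => LinearMap.id
  | n + 1 => (TensorProduct.map LinearMap.id (iterΔ Δ n)).comp Δ

/-- `n+1`-fold tensor power of a linear map. -/
noncomputable def powMap (f : C →ₗ[k] D) : ∀ n, (TP k C n).carrier →ₗ[k] (TP k D n).carrier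
  | 0 => f
  | n + 1 => TensorProduct.map f (powMap f n)

/-- Coassociativity. -/
def Coassoc (Δ : C →ₗ[k] C ⊗[k] C) : Prop :=
  (TensorProduct.assoc k C C C).toLinearMap ∘ₗ (TensorProduct.map Δ LinearMap.id) ∘ₗ Δ
    = (TensorProduct.map LinearMap.id Δ) ∘ₗ Δ

/-- A (non-counital) coalgebra, bundled. -/
structure NCCoalg (k : Type) [CommRing k] where
  carrier : Type
  [ag : AddCommGroup carrier]
  [mo : Module k carrier]
  Δ : carrier →ₗ[k] carrier ⊗[k] carrier
  coassoc : Coassoc Δ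

attribute [instance] NCCoalg.ag NCCoalg.mo

def IsCoalgHom (A B : NCCoalg k) (f : A.carrier →ₗ[k] B.carrier) : Prop :=
  B.Δ ∘ₗ f = (TensorProduct.map f f) ∘ₗ A.Δ

def Conilpotent (A : NCCoalg k) : Prop :=
  ∀ t : A.carrier, ∃ n, iterΔ A.Δ n t = 0

/-! The equalizer is the largest subcoalgebra `K` of `C` on which `f` and `g` agree. It exists
because subcoalgebras, i.e. subspaces `p` with `Δ p ⊆ p ⊗ p`, are closed under arbitrary sums,
and it receives every coalgebra map `h` with `f ∘ h = g ∘ h`, since the image of a coalgebra map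
is a subcoalgebra. Over a field `K ⊗ K → C ⊗ C` is injective, so `Δ` restricts to a coassociative
comultiplication on `K`; and tensor powers of the inclusion are injective, so `K` inherits
conilpotency from `C`. -/

lemma IsCoalgHom.iterΔ_comp {A B : NCCoalg k} {h : A.carrier →ₗ[k] B.carrier}
    (hh : IsCoalgHom A B h) : ∀ n, iterΔ B.Δ n ∘ₗ h = powMap h n ∘ₗ iterΔ A.Δ n
  | 0 => rfl
  | n + 1 => by
    show (map id (iterΔ B.Δ n) ∘ₗ B.Δ) ∘ₗ h = map h (powMap h n) ∘ₗ map id (iterΔ A.Δ n) ∘ₗ A.Δ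
    rw [comp_assoc, hh, ← comp_assoc, ← map_comp, ← comp_assoc, ← map_comp, id_comp, comp_id,
      hh.iterΔ_comp n]

lemma IsCoalgHom.of_comp {A B E : NCCoalg k} {e : E.carrier →ₗ[k] A.carrier}
    {j : B.carrier →ₗ[k] E.carrier} (he : IsCoalgHom E A e)
    (he_inj : Function.Injective (map e e)) (hej : IsCoalgHom B A (e ∘ₗ j)) :
    IsCoalgHom B E j := by
  refine LinearMap.ext fun b => he_inj ?_
  have h := congr($hej b)
  simp only [comp_apply, ← map_map] at h ⊢
  rw [← h, ← comp_apply (map e e), ← he, comp_apply]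

section Field

variable {k : Type} [Field k]

lemma powMap_injective {C D : Type} [AddCommGroup C] [Module k C] [AddCommGroup D] [Module k D]
    {f : C →ₗ[k] D} (hf : Function.Injective f) : ∀ n, Function.Injective (powMap f n)
  | 0 => hf
  | n + 1 => map_injective_of_flat_flat f (powMap f n) hf (powMap_injective hf n)

lemma Conilpotent.of_injective {A E : NCCoalg k} {e : E.carrier →ₗ[k] A.carrier}
    (hA : Conilpotent A) (he : IsCoalgHom E A e) (he_inj : Function.Injective e) :
    Conilpotent E := by
  intro x
  obtain ⟨n, hn⟩ := hA (e x)
  refine ⟨n, powMap_injective he_inj n ?_⟩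
  rw [← comp_apply (powMap e n), ← he.iterΔ_comp, comp_apply, hn, map_zero]

end Field

namespace NCCoalg

section CommRing

variable (A : NCCoalg k)

def IsSubcoalgebra (p : Submodule k A.carrier) : Prop :=
  p ≤ (range (mapIncl p p)).comap A.Δ

variable {A}

lemma isSubcoalgebra_range {B : NCCoalg k} {h : B.carrier →ₗ[k] A.carrier}
    (hh : IsCoalgHom B A h) : A.IsSubcoalgebra (range h) := by
  rintro _ ⟨b, rfl⟩
  rw [Submodule.mem_comap, ← comp_apply, hh, range_mapIncl, ← range_map]
  exact mem_range_self _ _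

lemma isSubcoalgebra_sSup {S : Set (Submodule k A.carrier)}
    (hS : ∀ p ∈ S, A.IsSubcoalgebra p) : A.IsSubcoalgebra (sSup S) :=
  sSup_le fun p hp =>
    (hS p hp).trans (Submodule.comap_mono (range_mapIncl_mono (le_sSup hp) (le_sSup hp)))

variable (A)

def maxSubcoalgebraIn (K : Submodule k A.carrier) : Submodule k A.carrier :=
  sSup {p | A.IsSubcoalgebra p ∧ p ≤ K}

lemma isSubcoalgebra_maxSubcoalgebraIn (K : Submodule k A.carrier) :
    A.IsSubcoalgebra (A.maxSubcoalgebraIn K) :=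
  isSubcoalgebra_sSup fun _ hp => hp.1

lemma maxSubcoalgebraIn_le (K : Submodule k A.carrier) : A.maxSubcoalgebraIn K ≤ K :=
  sSup_le fun _ hp => hp.2

lemma le_maxSubcoalgebraIn {K p : Submodule k A.carrier} (hp : A.IsSubcoalgebra p) (hpK : p ≤ K) :
    p ≤ A.maxSubcoalgebraIn K :=
  le_sSup ⟨hp, hpK⟩

lemma coassoc_of_injective {M : Type} [AddCommGroup M] [Module k M] {e : M →ₗ[k] A.carrier}
    (he : Function.Injective (map e (map e e))) {Δ : M →ₗ[k] M ⊗[k] M}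
    (hΔ : map e e ∘ₗ Δ = A.Δ ∘ₗ e) : Coassoc Δ := by
  refine LinearMap.ext fun x => he ?_
  have hΔx : A.Δ (e x) = map e e (Δ x) := congr($hΔ.symm x)
  have h := congr($A.coassoc (e x))
  simpa only [comp_apply, LinearEquiv.coe_coe, hΔx, map_map_assoc, map_map, hΔ, id_comp,
    comp_id] using h

end CommRing

section Field

variable {k : Type} [Field k] (A : NCCoalg k) {p : Submodule k A.carrier}

noncomputable def subcoalgebraΔ (hp : A.IsSubcoalgebra p) : p →ₗ[k] p ⊗[k] p :=
  (LinearEquiv.ofInjective (mapIncl p p)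
      (Module.Flat.tensorProduct_mapIncl_injective_of_right p p)).symm.toLinearMap ∘ₗ
    (A.Δ ∘ₗ p.subtype).codRestrict _ fun x => hp x.2

lemma mapIncl_comp_subcoalgebraΔ (hp : A.IsSubcoalgebra p) :
    mapIncl p p ∘ₗ A.subcoalgebraΔ hp = A.Δ ∘ₗ p.subtype := by
  ext x
  exact congr_arg Subtype.val ((LinearEquiv.ofInjective _
    (Module.Flat.tensorProduct_mapIncl_injective_of_right p p)).apply_symm_apply _)

noncomputable def subcoalgebra (hp : A.IsSubcoalgebra p) : NCCoalg k where
  carrier := p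
  Δ := A.subcoalgebraΔ hp
  coassoc := A.coassoc_of_injective
    (map_injective_of_flat_flat _ _ p.injective_subtype
      (Module.Flat.tensorProduct_mapIncl_injective_of_right p p))
    (A.mapIncl_comp_subcoalgebraΔ hp)

lemma isCoalgHom_subtype (hp : A.IsSubcoalgebra p) :
    IsCoalgHom (A.subcoalgebra hp) A p.subtype :=
  (A.mapIncl_comp_subcoalgebraΔ hp).symm

end Field

end NCCoalg

theorem equalizer_of_conilpotent_coalgebras_general (k : Type) [Field k]
    (C D : NCCoalg k) (hC : Conilpotent C)
    (f g : C.carrier →ₗ[k] D.carrier) :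
    ∃ (E : NCCoalg k) (e : E.carrier →ₗ[k] C.carrier),
      Conilpotent E ∧ IsCoalgHom E C e ∧ f ∘ₗ e = g ∘ₗ e ∧
      ∀ (B : NCCoalg k), Conilpotent B →
        ∀ h : B.carrier →ₗ[k] C.carrier, IsCoalgHom B C h → f ∘ₗ h = g ∘ₗ h →
          ∃! j : B.carrier →ₗ[k] E.carrier, IsCoalgHom B E j ∧ e ∘ₗ j = h := by
  set K := C.maxSubcoalgebraIn (eqLocus f g)
  have hK : C.IsSubcoalgebra K := C.isSubcoalgebra_maxSubcoalgebraIn _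
  have he := C.isCoalgHom_subtype hK
  refine ⟨C.subcoalgebra hK, K.subtype, hC.of_injective he K.injective_subtype, he, ?_, ?_⟩
  · exact LinearMap.ext fun x => C.maxSubcoalgebraIn_le _ x.2
  intro B _ h hh hfg
  have hhK : range h ≤ K :=
    C.le_maxSubcoalgebraIn (C.isSubcoalgebra_range hh) (by rintro _ ⟨b, rfl⟩; exact congr($hfg b))
  refine ⟨h.codRestrict K fun b => hhK ⟨b, rfl⟩, ⟨he.of_comp ?_ hh, rfl⟩, ?_⟩
  · exact Module.Flat.tensorProduct_mapIncl_injective_of_right K K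
  rintro j ⟨-, hj⟩
  exact LinearMap.ext fun b => Subtype.ext congr($hj b)

/-- the category of conilpotent (cocomplete) non-counital `k`-coalgebras
admits equalizers: every pair of parallel coalgebra homomorphisms between conilpotent
coalgebras has an equalizer (stated via its universal property). -/
theorem equalizer_of_conilpotent_coalgebras (k : Type) [Field k]
    (C D : NCCoalg k) (hC : Conilpotent C) (hD : Conilpotent D)
    (f g : C.carrier →ₗ[k] D.carrier)
    (hf : IsCoalgHom C D f) (hg : IsCoalgHom C D g) :
    ∃ (E : NCCoalg k) (e : E.carrier →ₗ[k] C.carrier),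
      Conilpotent E ∧ IsCoalgHom E C e ∧ f ∘ₗ e = g ∘ₗ e ∧
      ∀ (B : NCCoalg k), Conilpotent B →
        ∀ h : B.carrier →ₗ[k] C.carrier, IsCoalgHom B C h → f ∘ₗ h = g ∘ₗ h →
          ∃! j : B.carrier →ₗ[k] E.carrier, IsCoalgHom B E j ∧ e ∘ₗ j = h :=
  equalizer_of_conilpotent_coalgebras_general k C D hC f g
end

section
/- Let C be a (non-counital) k-coalgebra. For n ≥ 1, let F_n C = Ker(Δ^(n+1) : C → C^⊗(n+1)). Then the filtration {F_n C} is compatible with the comultiplication: Δ(F_n C) ⊆ Σ_{p+q=n, p,q≥1} F_p C ⊗ F_q C, viewed inside C ⊗ C. -/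
open TensorProduct LinearMap

variable (k : Type) [CommRing k]

variable {k}
variable {C D : Type} [AddCommGroup C] [Module k C] [AddCommGroup D] [Module k D]

/-! By coassociativity, `(Δ^(p+1) ⊗ Δ^(q+1)) ∘ Δ` is `Δ^(p+q+2)` up to reassociation, so for
`x ∈ F_n` and `p + q = n - 1` the element `Δ x` is killed by `C ⊗ C → C/F_p ⊗ C/F_q` (over a field
the kernel of `f ⊗ g` depends only on `ker f` and `ker g`). Since `F_0 = 0`, projections `e_m` onto
`F_m` give `Δ x = ∑_{i < n-1} ((e_{i+1} - e_i) ⊗ 1) (Δ x)`, and the vanishing for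
`(p, q) = (i, n-1-i)` lets one replace `1` by `e_{n-1-i}` in the `i`-th term, which then lies in
`F_{i+1} ⊗ F_{n-1-i}`. -/

section Ring

variable {R : Type*} [CommRing R] {M N P Q : Type*} [AddCommGroup M] [Module R M]
  [AddCommGroup N] [Module R N] [AddCommGroup P] [Module R P] [AddCommGroup Q] [Module R Q]

theorem LinearMap.IsProj.le_ker_id_sub {p : Submodule R M} {e : M →ₗ[R] M} (he : IsProj p e) :
    p ≤ ker (LinearMap.id - e) := fun v hv => by
  simp [he.map_id v hv]

theorem TensorProduct.map_apply_mem_range_map_subtype {p : Submodule R P} {q : Submodule R Q}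
    {f : M →ₗ[R] P} {g : N →ₗ[R] Q} (hf : ∀ x, f x ∈ p) (hg : ∀ y, g y ∈ q) (z : M ⊗[R] N) :
    map f g z ∈ range (map p.subtype q.subtype) := by
  refine range_map_mono ?_ ?_ (mem_range_self _ z)
  · rw [Submodule.range_subtype]; rintro _ ⟨x, rfl⟩; exact hf x
  · rw [Submodule.range_subtype]; rintro _ ⟨y, rfl⟩; exact hg y

end Ring

section Field

variable {K : Type*} [Field K] {M M₁ M₂ N N₁ N₂ : Type*}
  [AddCommGroup M] [Module K M] [AddCommGroup M₁] [Module K M₁] [AddCommGroup M₂] [Module K M₂]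
  [AddCommGroup N] [Module K N] [AddCommGroup N₁] [Module K N₁] [AddCommGroup N₂] [Module K N₂]

theorem LinearMap.exists_comp_eq_of_ker_le {g : M →ₗ[K] M₁} {f : M →ₗ[K] M₂}
    (h : ker g ≤ ker f) : ∃ f' : M₁ →ₗ[K] M₂, f' ∘ₗ g = f := by
  obtain ⟨f', hf'⟩ :=
    LinearMap.exists_extend ((ker g).liftQ f h ∘ₗ g.quotKerEquivRange.symm.toLinearMap)
  refine ⟨f', LinearMap.ext fun v => ?_⟩
  simpa using congr($hf' ⟨g v, mem_range_self g v⟩)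

theorem TensorProduct.ker_map_le_ker_map {f : M →ₗ[K] M₁} {f' : M →ₗ[K] M₂}
    {g : N →ₗ[K] N₁} {g' : N →ₗ[K] N₂} (hf : ker f ≤ ker f') (hg : ker g ≤ ker g') :
    ker (map f g) ≤ ker (map f' g') := by
  obtain ⟨φ, rfl⟩ := exists_comp_eq_of_ker_le hf
  obtain ⟨ψ, rfl⟩ := exists_comp_eq_of_ker_le hg
  rw [map_comp]
  exact ker_le_ker_comp _ _

theorem Submodule.exists_isProj (p : Submodule K M) : ∃ e : M →ₗ[K] M, IsProj p e := by
  obtain ⟨r, hr⟩ := LinearMap.exists_extend (LinearMap.id : p →ₗ[K] p)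
  exact ⟨p.subtype ∘ₗ r, fun v => (r v).2, fun v hv => congr(($hr ⟨v, hv⟩ : M))⟩

theorem TensorProduct.mem_iSup_range_map_of_map_mkQ_eq_zero {A : ℕ → Submodule K M}
    {B : ℕ → Submodule K N} (hA : Monotone A) (hA₀ : A 0 = ⊥) (hB₀ : B 0 = ⊥) (L : ℕ)
    {z : M ⊗[K] N} (hz : ∀ p q, p + q = L → map (A p).mkQ (B q).mkQ z = 0) :
    z ∈ ⨆ (p : ℕ) (q : ℕ) (_ : p + q = L + 1 ∧ 1 ≤ p ∧ 1 ≤ q),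
      range (map (A p).subtype (B q).subtype) := by
  choose e he using fun m => (A m).exists_isProj
  choose e' he' using fun m => (B m).exists_isProj
  have he₀ : e 0 = 0 := LinearMap.ext fun v => by simpa [hA₀] using (he 0).map_mem v
  have hz_top : (e L).rTensor N z = z := by
    have := ker_map_le_ker_map (g' := LinearMap.id) (by simpa using (he L).le_ker_id_sub)
      (by simp [hB₀]) (hz L 0 (add_zero L))
    rw [mem_ker, ← rTensor, rTensor_sub, rTensor_id, LinearMap.sub_apply, id_apply,
      sub_eq_zero] at this
    exact this.symm
  set π : ℕ → M →ₗ[K] M := fun i => e (i + 1) - e i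
  have hz_sum : z = ∑ i ∈ Finset.range L, (π i).rTensor N z := by
    rw [← LinearMap.sum_apply, ← coe_rTensorHom, ← map_sum, Finset.sum_range_sub, he₀, sub_zero,
      coe_rTensorHom, hz_top]
  rw [hz_sum]
  refine Submodule.sum_mem _ fun i hi => ?_
  rw [Finset.mem_range] at hi
  have hπ_ker : A i ≤ ker (π i) := fun v hv => by
    simp [π, (he _).map_id v (hA i.le_succ hv), (he i).map_id v hv]
  have hπ_eq : (π i).rTensor N z = map (π i) (e' (L - i)) z := by
    have := ker_map_le_ker_map (by simpa using hπ_ker) (by simpa using (he' (L - i)).le_ker_id_sub)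
      (hz i (L - i) (by omega))
    rw [mem_ker, ← lTensor_comp_rTensor, comp_apply, lTensor_sub, lTensor_id,
      LinearMap.sub_apply, id_apply, sub_eq_zero] at this
    rwa [← lTensor_comp_rTensor]
  refine Submodule.mem_iSup_of_mem (i + 1) <| Submodule.mem_iSup_of_mem (L - i) <|
    Submodule.mem_iSup_of_mem ⟨by omega, by omega, by omega⟩ ?_
  rw [hπ_eq]
  exact map_apply_mem_range_map_subtype
    (fun v => sub_mem ((he _).map_mem v) (hA i.le_succ ((he i).map_mem v))) (he' _).map_mem z

end Field

section IteratedComultiplication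

variable {K : Type} [Field K] {C : Type} [AddCommGroup C] [Module K C] (Δ : C →ₗ[K] C ⊗[K] C)

theorem ker_iterΔ_zero : ker (iterΔ Δ 0) = ⊥ := ker_id

theorem mem_ker_iterΔ_succ {n : ℕ} {x : C} :
    x ∈ ker (iterΔ Δ (n + 1)) ↔ Δ x ∈ ker ((iterΔ Δ n).lTensor C) := Iff.rfl

theorem ker_iterΔ_le_ker_iterΔ_succ (n : ℕ) : ker (iterΔ Δ n) ≤ ker (iterΔ Δ (n + 1)) := by
  induction n with
  | zero => simp [ker_iterΔ_zero]
  | succ n ih =>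
    intro x hx
    rw [mem_ker_iterΔ_succ] at hx ⊢
    exact ker_map_le_ker_map le_rfl ih hx

theorem monotone_ker_iterΔ : Monotone fun n => ker (iterΔ Δ n) :=
  monotone_nat_of_le_succ (ker_iterΔ_le_ker_iterΔ_succ Δ)

variable {Δ}

theorem Coassoc.rTensor_comp_eq (hΔ : Coassoc Δ) :
    Δ.rTensor C ∘ₗ Δ = (TensorProduct.assoc K C C C).symm.toLinearMap ∘ₗ Δ.lTensor C ∘ₗ Δ :=
  (LinearEquiv.eq_toLinearMap_symm_comp _ _).2 hΔ

theorem Coassoc.map_lTensor_comp_comp_eq {M N : Type} [AddCommGroup M] [Module K M]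
    [AddCommGroup N] [Module K N] (hΔ : Coassoc Δ) (f : C →ₗ[K] M) (g : C →ₗ[K] N) :
    map (f.lTensor C ∘ₗ Δ) g ∘ₗ Δ =
      (TensorProduct.assoc K C M N).symm.toLinearMap ∘ₗ (map f g ∘ₗ Δ).lTensor C ∘ₗ Δ := by
  rw [← map_comp_rTensor, comp_assoc, hΔ.rTensor_comp_eq, ← comp_assoc, ← comp_assoc, lTensor,
    map_map_comp_assoc_symm_eq, lTensor_comp, comp_assoc, comp_assoc]
  rfl

theorem Coassoc.ker_iterΔ_le_ker_map_comp (hΔ : Coassoc Δ) (a b : ℕ) :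
    ker (iterΔ Δ (a + b + 1)) ≤ ker (map (iterΔ Δ a) (iterΔ Δ b) ∘ₗ Δ) := by
  induction a with
  | zero => rw [zero_add]; rfl
  | succ a ih =>
    intro x hx
    rw [show a + 1 + b + 1 = a + b + 1 + 1 by omega, mem_ker_iterΔ_succ] at hx
    have hx' : (map (iterΔ Δ a) (iterΔ Δ b) ∘ₗ Δ).lTensor C (Δ x) = 0 :=
      ker_map_le_ker_map le_rfl ih hx
    show x ∈ ker (map ((iterΔ Δ a).lTensor C ∘ₗ Δ) (iterΔ Δ b) ∘ₗ Δ)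
    rw [hΔ.map_lTensor_comp_comp_eq, mem_ker, comp_apply, comp_apply, hx', map_zero]

end IteratedComultiplication

/-- for a non-counital coalgebra `C`, the coradical-type filtration
`F_n C = Ker Δ^{(n+1)}` (here `iterΔ Δ n = Δ^{(n+1)}`) is compatible with the
comultiplication: `Δ(F_n C) ⊆ Σ_{p+q=n, p,q≥1} F_p C ⊗ F_q C` inside `C ⊗ C`. -/
theorem comul_filtration_compat (k : Type) [Field k]
    (C : Type) [AddCommGroup C] [Module k C]
    (Δ : C →ₗ[k] C ⊗[k] C) (hΔ : Coassoc Δ)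
    (F : ℕ → Submodule k C) (hF : ∀ n, F n = LinearMap.ker (iterΔ Δ n)) :
    ∀ n, 1 ≤ n → ∀ x ∈ F n,
      Δ x ∈ ⨆ (p : ℕ) (q : ℕ) (_ : p + q = n ∧ 1 ≤ p ∧ 1 ≤ q),
        LinearMap.range (TensorProduct.map (F p).subtype (F q).subtype) := by
  obtain rfl : F = fun n => ker (iterΔ Δ n) := funext hF
  rintro n hn x hx
  obtain ⟨N, rfl⟩ : ∃ N, n = N + 1 := ⟨n - 1, by omega⟩
  refine mem_iSup_range_map_of_map_mkQ_eq_zero (monotone_ker_iterΔ Δ) (ker_iterΔ_zero Δ)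
    (ker_iterΔ_zero Δ) N fun p q hpq => ?_
  have hx' : x ∈ ker (map (iterΔ Δ p) (iterΔ Δ q) ∘ₗ Δ) :=
    hΔ.ker_iterΔ_le_ker_map_comp p q (by rwa [hpq])
  exact ker_map_le_ker_map (by rw [Submodule.ker_mkQ]) (by rw [Submodule.ker_mkQ]) hx'
end

section
/- Let k be a field, C a (non-counital) k-coalgebra with comultiplication Δ, and f, g : C → D coalgebra homomorphisms into a k-coalgebra D. Define E = ⋂_{p,q≥0} Ker((1^⊗p ⊗ (f−g) ⊗ 1^⊗q) ∘ Δ^(p+1+q)), where Δ^(m) is the iterated comultiplication (with Δ^(1) = id). Then Δ(E) ⊆ E ⊗ C and Δ(E) ⊆ C ⊗ E; in particular Δ(E) ⊆ (E ⊗ C) ∩ (C ⊗ E) = E ⊗ E, so E is a subcoalgebra of C. -/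
open TensorProduct LinearMap

variable (k : Type) [CommRing k]

variable {k}
variable {C D : Type} [AddCommGroup C] [Module k C] [AddCommGroup D] [Module k D]

/-- Cast between tensor powers of equal length. -/
noncomputable def TPcast {m n : ℕ} (h : m = n) :
    (TP k C m).carrier ≃ₗ[k] (TP k C n).carrier := by
  subst h; exact LinearEquiv.refl k _

variable (k C) in
/-- `Tail M q` is `M ⊗ C^{⊗q}` (right-nested). -/
noncomputable def Tail (M : Type) [AddCommGroup M] [Module k M] : ℕ → ModB k
  | 0 => ⟨M⟩
  | q + 1 => ⟨M ⊗[k] (TP k C q).carrier⟩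

/-- `φ ⊗ 1^{⊗q} : C^{⊗(q+1)} → M ⊗ C^{⊗q}`, applying `φ` to the first factor. -/
noncomputable def tailMap {M : Type} [AddCommGroup M] [Module k M] (φ : C →ₗ[k] M) :
    ∀ q, (TP k C q).carrier →ₗ[k] (Tail k C M q).carrier
  | 0 => φ
  | q + 1 =>
    (TensorProduct.map φ LinearMap.id
      : (C ⊗[k] (TP k C q).carrier) →ₗ[k] (M ⊗[k] (TP k C q).carrier))

variable (k C) in
/-- `Mix M p q` is `C^{⊗p} ⊗ M ⊗ C^{⊗q}` (right-nested). -/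
noncomputable def Mix (M : Type) [AddCommGroup M] [Module k M] : ℕ → ℕ → ModB k
  | 0, q => Tail k C M q
  | p + 1, q => ⟨C ⊗[k] (Mix M p q).carrier⟩

/-- `1^{⊗p} ⊗ φ ⊗ 1^{⊗q} : C^{⊗(p+1+q)} → C^{⊗p} ⊗ M ⊗ C^{⊗q}`
(the domain has `p+q+1` factors, i.e. is `TP k C (p+q)`). -/
noncomputable def sandwich {M : Type} [AddCommGroup M] [Module k M] (φ : C →ₗ[k] M) :
    ∀ p q, (TP k C (p + q)).carrier →ₗ[k] (Mix k C M p q).carrier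
  | 0, q => (tailMap φ q) ∘ₗ (TPcast (by omega : 0 + q = q)).toLinearMap
  | p + 1, q =>
    (TensorProduct.map LinearMap.id (sandwich φ p q)
        : (C ⊗[k] (TP k C (p + q)).carrier) →ₗ[k] (C ⊗[k] (Mix k C M p q).carrier)) ∘ₗ
      (TPcast (by omega : (p + 1) + q = (p + q) + 1)).toLinearMap

/-!
Write `K p q = (1^{⊗p} ⊗ (f - g) ⊗ 1^{⊗q}) ∘ Δ^{(p+1+q)}`, so that `E = ⋂ ker (K p q)`.
Peeling off the first factor gives `K (p+1) q = (1 ⊗ K p q) ∘ Δ`, and coassociativity gives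
`K p (q+1) = (K p q ⊗ 1) ∘ Δ` up to reassociating the tensor factors. Hence for `x ∈ E` both
`(1 ⊗ K p q) (Δ x)` and `(K p q ⊗ 1) (Δ x)` vanish for all `p, q`; expanding `Δ x` in a basis
shows `Δ x ∈ C ⊗ E` and `Δ x ∈ E ⊗ C`, and over a field `(E ⊗ C) ∩ (C ⊗ E) = E ⊗ E` by
flatness of `C ⧸ E`.
-/

section TensorSubmodule

variable {R V W : Type*} [CommRing R] [AddCommGroup V] [Module R V] [AddCommGroup W]
  [Module R W]

theorem mem_range_lTensor_iInf_ker [Module.Free R V] {ι : Type*} {M : ι → Type*}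
    [∀ i, AddCommGroup (M i)] [∀ i, Module R (M i)] (K : ∀ i, W →ₗ[R] M i) {t : V ⊗[R] W}
    (ht : ∀ i, lTensor V (K i) t = 0) : t ∈ range (lTensor V (⨅ i, ker (K i)).subtype) := by
  classical
  let b := Module.Free.chooseBasis R V
  obtain ⟨c, rfl⟩ := TensorProduct.eq_repr_basis_left b t
  have hc : ∀ j, c j ∈ ⨅ i, ker (K i) := by
    refine fun j => Submodule.mem_iInf _ |>.mpr fun i => ?_
    have := TensorProduct.sum_tmul_basis_left_eq_zero b (c.mapRange (K i) (map_zero _)) (by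
      rw [← ht i, Finsupp.sum_mapRange_index (by simp), map_finsuppSum]
      simp)
    simpa using DFunLike.congr_fun this j
  exact Submodule.finsuppSum_mem _ _ _ _ fun j _ => ⟨b j ⊗ₜ ⟨c j, hc j⟩, rfl⟩

theorem mem_range_rTensor_iInf_ker [Module.Free R V] {ι : Type*} {M : ι → Type*}
    [∀ i, AddCommGroup (M i)] [∀ i, Module R (M i)] (K : ∀ i, W →ₗ[R] M i) {t : W ⊗[R] V}
    (ht : ∀ i, rTensor V (K i) t = 0) : t ∈ range (rTensor V (⨅ i, ker (K i)).subtype) := by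
  obtain ⟨s, hs⟩ := mem_range_lTensor_iInf_ker K (t := TensorProduct.comm R W V t) fun i => by
    rw [lTensor_comm, ht i, map_zero]
  exact ⟨TensorProduct.comm R V _ s, by rw [rTensor_comm, hs, TensorProduct.comm_comm]⟩

theorem range_rTensor_subtype_inf_range_lTensor_subtype (E : Submodule R V)
    (F : Submodule R W) [Module.Flat R (V ⧸ E)] :
    range (rTensor W E.subtype) ⊓ range (lTensor V F.subtype)
      = range (map E.subtype F.subtype) := by
  have hexact := exact_subtype_mkQ E
  refine le_antisymm ?_ (le_inf ?_ ?_)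
  · rintro t ⟨⟨u, rfl⟩, ⟨s, hs⟩⟩
    have hs0 : rTensor F E.mkQ s = 0 := by
      apply Module.Flat.lTensor_preserves_injective_linearMap F.subtype F.injective_subtype
      rw [map_zero, ← comp_apply, lTensor_comp_rTensor, ← rTensor_comp_lTensor, comp_apply, hs,
        ← comp_apply, ← rTensor_comp, hexact.linearMap_comp_eq_zero, rTensor_zero,
        LinearMap.zero_apply]
    obtain ⟨v, rfl⟩ := (rTensor_exact F hexact E.mkQ_surjective s).mp hs0
    exact ⟨v, by rw [← hs, ← comp_apply, lTensor_comp_rTensor]⟩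
  · rw [← rTensor_comp_lTensor]; exact range_comp_le_range _ _
  · rw [← lTensor_comp_rTensor]; exact range_comp_le_range _ _

end TensorSubmodule

section Comultiplication

variable {Δ : C →ₗ[k] C ⊗[k] C}

theorem Coassoc.lTensor_comp_of_rTensor_comp (hΔ : Coassoc Δ) {N N' : Type*}
    [AddCommGroup N] [Module k N] [AddCommGroup N'] [Module k N']
    {S : C →ₗ[k] N} {S' : C →ₗ[k] N'} {J : N ⊗[k] C →ₗ[k] N'}
    (h : J ∘ₗ rTensor C S ∘ₗ Δ = S') :
    (lTensor C J ∘ₗ (TensorProduct.assoc k C N C).toLinearMap) ∘ₗ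
        rTensor C (lTensor C S ∘ₗ Δ) ∘ₗ Δ
      = lTensor C S' ∘ₗ Δ := by
  have hΔ' : (TensorProduct.assoc k C C C).toLinearMap ∘ₗ rTensor C Δ ∘ₗ Δ
      = lTensor C Δ ∘ₗ Δ := hΔ
  have hnat : (TensorProduct.assoc k C N C).toLinearMap ∘ₗ rTensor C (lTensor C S)
      = lTensor C (rTensor C S) ∘ₗ (TensorProduct.assoc k C C C).toLinearMap :=
    (map_map_comp_assoc_eq _ _ _).symm
  calc _ = lTensor C J ∘ₗ lTensor C (rTensor C S) ∘ₗ
          (TensorProduct.assoc k C C C).toLinearMap ∘ₗ rTensor C Δ ∘ₗ Δ := by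
        simp only [rTensor_comp, comp_assoc]
        rw [← comp_assoc (rTensor C Δ ∘ₗ Δ), hnat, comp_assoc]
    _ = lTensor C S' ∘ₗ Δ := by
        rw [hΔ', ← h, lTensor_comp, lTensor_comp]
        rfl

variable (k C) in
noncomputable def TP.snocEquiv :
    ∀ q : ℕ, (TP k C q).carrier ⊗[k] C ≃ₗ[k] (TP k C (q + 1)).carrier
  | 0 => LinearEquiv.refl k _
  | q + 1 =>
    TensorProduct.assoc k C (TP k C q).carrier C ≪≫ₗ LinearEquiv.lTensor C (TP.snocEquiv q)

theorem TP.snocEquiv_comp_rTensor_iterΔ (hΔ : Coassoc Δ) :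
    ∀ q, (TP.snocEquiv k C q).toLinearMap ∘ₗ rTensor C (iterΔ Δ q) ∘ₗ Δ = iterΔ Δ (q + 1)
  | 0 => by
    show rTensor C LinearMap.id ∘ₗ Δ = lTensor C LinearMap.id ∘ₗ Δ
    rw [rTensor_id, lTensor_id]
  | q + 1 => hΔ.lTensor_comp_of_rTensor_comp (TP.snocEquiv_comp_rTensor_iterΔ hΔ q)

variable {M : Type} [AddCommGroup M] [Module k M]

theorem TPcast_comp_iterΔ {m n : ℕ} (h : m = n) :
    (TPcast h).toLinearMap ∘ₗ iterΔ Δ m = iterΔ Δ n := by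
  subst h; rfl

theorem sandwich_zero_comp_iterΔ (φ : C →ₗ[k] M) (q : ℕ) :
    sandwich φ 0 q ∘ₗ iterΔ Δ (0 + q) = tailMap φ q ∘ₗ iterΔ Δ q :=
  congrArg (tailMap φ q ∘ₗ ·) (TPcast_comp_iterΔ (zero_add q))

theorem sandwich_succ_comp_iterΔ (φ : C →ₗ[k] M) (p q : ℕ) :
    sandwich φ (p + 1) q ∘ₗ iterΔ Δ (p + 1 + q)
      = lTensor C (sandwich φ p q ∘ₗ iterΔ Δ (p + q)) ∘ₗ Δ := by
  refine (congrArg (lTensor C (sandwich φ p q) ∘ₗ ·)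
    (TPcast_comp_iterΔ (Nat.add_right_comm p 1 q))).trans ?_
  rw [lTensor_comp, comp_assoc]
  rfl

variable (k C M) in
noncomputable def Mix.snocEquiv :
    ∀ p q : ℕ, (Mix k C M p q).carrier ⊗[k] C ≃ₗ[k] (Mix k C M p (q + 1)).carrier
  | 0, 0 => LinearEquiv.refl k _
  | 0, q + 1 =>
    TensorProduct.assoc k M (TP k C q).carrier C ≪≫ₗ LinearEquiv.lTensor M (TP.snocEquiv k C q)
  | p + 1, q =>
    TensorProduct.assoc k C (Mix k C M p q).carrier C ≪≫ₗ
      LinearEquiv.lTensor C (Mix.snocEquiv p q)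

theorem Mix.snocEquiv_zero_comp_rTensor_tailMap (φ : C →ₗ[k] M) :
    ∀ q, (Mix.snocEquiv k C M 0 q).toLinearMap ∘ₗ rTensor C (tailMap φ q)
      = tailMap φ (q + 1) ∘ₗ (TP.snocEquiv k C q).toLinearMap
  | 0 => rfl
  | _ + 1 => TensorProduct.ext_threefold fun _ _ _ => rfl

theorem Mix.snocEquiv_comp_rTensor_sandwich (hΔ : Coassoc Δ) (φ : C →ₗ[k] M) :
    ∀ p q, (Mix.snocEquiv k C M p q).toLinearMap ∘ₗ
        rTensor C (sandwich φ p q ∘ₗ iterΔ Δ (p + q)) ∘ₗ Δ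
      = sandwich φ p (q + 1) ∘ₗ iterΔ Δ (p + (q + 1))
  | 0, q => by
    erw [sandwich_zero_comp_iterΔ, sandwich_zero_comp_iterΔ, rTensor_comp]
    rw [← comp_assoc, ← comp_assoc, Mix.snocEquiv_zero_comp_rTensor_tailMap]
    exact congrArg (tailMap φ (q + 1) ∘ₗ ·) (TP.snocEquiv_comp_rTensor_iterΔ hΔ q)
  | p + 1, q =>
    (congrArg (fun F => (Mix.snocEquiv k C M (p + 1) q).toLinearMap ∘ₗ rTensor C F ∘ₗ Δ)
        (sandwich_succ_comp_iterΔ φ p q)).trans <|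
      (hΔ.lTensor_comp_of_rTensor_comp (Mix.snocEquiv_comp_rTensor_sandwich hΔ φ p q)).trans
        (sandwich_succ_comp_iterΔ φ p (q + 1)).symm

end Comultiplication

theorem equalizer_subspace_is_subcoalgebra_general (k : Type) [Field k]
    (C D : Type) [AddCommGroup C] [Module k C] [AddCommGroup D] [Module k D]
    (ΔC : C →ₗ[k] C ⊗[k] C)
    (hC : Coassoc ΔC)
    (f g : C →ₗ[k] D)
    (E : Submodule k C)
    (hE : E = ⨅ (p : ℕ) (q : ℕ),
      LinearMap.ker ((sandwich (f - g) p q) ∘ₗ iterΔ ΔC (p + q))) :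
    ∀ x ∈ E,
      ΔC x ∈ LinearMap.range (TensorProduct.map E.subtype (LinearMap.id : C →ₗ[k] C)) ∧
      ΔC x ∈ LinearMap.range (TensorProduct.map (LinearMap.id : C →ₗ[k] C) E.subtype) ∧
      ΔC x ∈ LinearMap.range (TensorProduct.map E.subtype E.subtype) := by
  intro x hx
  let K (i : ℕ × ℕ) : C →ₗ[k] (Mix k C D i.1 i.2).carrier :=
    sandwich (f - g) i.1 i.2 ∘ₗ iterΔ ΔC (i.1 + i.2)
  replace hE : E = ⨅ i, ker (K i) := by rw [hE, iInf_prod]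
  have hK (i : ℕ × ℕ) : K i x = 0 := (Submodule.mem_iInf _).mp (hE ▸ hx) i
  have hleft : ΔC x ∈ range (lTensor C E.subtype) := by
    rw [hE]
    refine mem_range_lTensor_iInf_ker K fun i => ?_
    rw [← comp_apply, ← sandwich_succ_comp_iterΔ]
    exact hK (i.1 + 1, i.2)
  have hright : ΔC x ∈ range (rTensor C E.subtype) := by
    rw [hE]
    refine mem_range_rTensor_iInf_ker K fun i => (Mix.snocEquiv k C D i.1 i.2).injective ?_
    rw [map_zero]
    exact (DFunLike.congr_fun (Mix.snocEquiv_comp_rTensor_sandwich hC (f - g) i.1 i.2) x).trans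
      (hK (i.1, i.2 + 1))
  refine ⟨hright, hleft, ?_⟩
  rw [← range_rTensor_subtype_inf_range_lTensor_subtype]
  exact ⟨hright, hleft⟩

/-- for coalgebra homomorphisms `f, g : C → D`, the subspace
`E = ⋂_{p,q≥0} Ker((1^{⊗p} ⊗ (f−g) ⊗ 1^{⊗q}) ∘ Δ^{(p+1+q)})` satisfies
`Δ(E) ⊆ E ⊗ C`, `Δ(E) ⊆ C ⊗ E` and `Δ(E) ⊆ E ⊗ E`; in particular `E` is a
subcoalgebra of `C`.  (Here `iterΔ Δ (p+q) = Δ^{(p+q+1)}`.) -/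
theorem equalizer_subspace_is_subcoalgebra (k : Type) [Field k]
    (C D : Type) [AddCommGroup C] [Module k C] [AddCommGroup D] [Module k D]
    (ΔC : C →ₗ[k] C ⊗[k] C) (ΔD : D →ₗ[k] D ⊗[k] D)
    (hC : Coassoc ΔC) (hD : Coassoc ΔD)
    (f g : C →ₗ[k] D)
    (hf : ΔD ∘ₗ f = (TensorProduct.map f f) ∘ₗ ΔC)
    (hg : ΔD ∘ₗ g = (TensorProduct.map g g) ∘ₗ ΔC)
    (E : Submodule k C)
    (hE : E = ⨅ (p : ℕ) (q : ℕ),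
      LinearMap.ker ((sandwich (f - g) p q) ∘ₗ iterΔ ΔC (p + q))) :
    ∀ x ∈ E,
      ΔC x ∈ LinearMap.range (TensorProduct.map E.subtype (LinearMap.id : C →ₗ[k] C)) ∧
      ΔC x ∈ LinearMap.range (TensorProduct.map (LinearMap.id : C →ₗ[k] C) E.subtype) ∧
      ΔC x ∈ LinearMap.range (TensorProduct.map E.subtype E.subtype) :=
  equalizer_subspace_is_subcoalgebra_general k C D ΔC hC f g E hE
end
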